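/- arXiv:2103.03138 — 3 statements merged into one kernel-verified Lean document; each statement's English description precedes it below -/
import Mathlib

section
/- Let g be a positive integer, let τ be a symmetric g×g complex matrix whose imaginary part is positive definite, and let z ∈ ℂ^g. Then the family (exp(πi nᵀτn + 2πi nᵀz))_{n ∈ ℤ^g} is summable (the series defining the Riemann theta function converges absolutely). -/
/-!
A positive definite quadratic form attains a positive minimum `c` on the unit sphere, so
`nᵀ (Im τ) n ≥ c ‖n‖²`. Replacing `τ` by the diagonal matrix with entries `c * I` therefore
only enlarges the absolute value of every term, and for a diagonal period matrix the term
factors into a product of one-variable Jacobi theta terms, whose series converge.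
-/

open Complex Matrix Real

theorem exists_pos_mul_norm_sq_le_of_homogeneous {E : Type*} [NormedAddCommGroup E]
    [NormedSpace ℝ E] [FiniteDimensional ℝ E] {q : E → ℝ} (hq : Continuous q)
    (hsmul : ∀ (t : ℝ) x, q (t • x) = t ^ 2 * q x) (hpos : ∀ x ≠ 0, 0 < q x) :
    ∃ c > 0, ∀ x, c * ‖x‖ ^ 2 ≤ q x := by
  have hq0 : q 0 = 0 := by simpa using hsmul 0 0
  rcases subsingleton_or_nontrivial E with hE | hE
  · exact ⟨1, one_pos, fun x => by simp [Subsingleton.elim x 0, hq0]⟩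
  obtain ⟨x₀, hx₀, hmin⟩ := (isCompact_sphere (0 : E) 1).exists_isMinOn
    (NormedSpace.sphere_nonempty.2 zero_le_one) hq.continuousOn
  refine ⟨q x₀, hpos x₀ (ne_zero_of_mem_unit_sphere ⟨x₀, hx₀⟩), fun x => ?_⟩
  rcases eq_or_ne x 0 with rfl | hx
  · simp [hq0]
  have hx' : ‖x‖⁻¹ • x ∈ Metric.sphere (0 : E) 1 := by simp [norm_smul, hx]
  calc q x₀ * ‖x‖ ^ 2 ≤ q (‖x‖⁻¹ • x) * ‖x‖ ^ 2 :=
        mul_le_mul_of_nonneg_right (hmin hx') (sq_nonneg _)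
    _ = q x := by rw [hsmul]; field_simp

theorem Matrix.PosDef.exists_pos_mul_sum_sq_le {ι : Type*} [Fintype ι] {M : Matrix ι ι ℝ}
    (hM : M.PosDef) : ∃ c > 0, ∀ x : ι → ℝ, c * ∑ i, x i ^ 2 ≤ x ⬝ᵥ M *ᵥ x := by
  obtain ⟨c, hc, hle⟩ := exists_pos_mul_norm_sq_le_of_homogeneous
    (E := EuclideanSpace ℝ ι) (q := fun x => x.ofLp ⬝ᵥ M *ᵥ x.ofLp) (by fun_prop)
    (fun t x => by simp [Matrix.mulVec_smul]; ring)
    (fun x hx => hM.dotProduct_mulVec_pos (by simpa using hx))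
  refine ⟨c, hc, fun x => ?_⟩
  simpa [EuclideanSpace.norm_sq_eq] using hle (WithLp.toLp 2 x)

theorem summable_fin_prod_of_nonneg {β : Type*} : ∀ {n : ℕ} {f : Fin n → β → ℝ},
    (∀ i, Summable (f i)) → (∀ i b, 0 ≤ f i b) →
    Summable fun x : Fin n → β => ∏ i, f i (x i)
  | 0, f, _, _ => by simpa using summable_of_hasFiniteSupport (Set.toFinite _)
  | n + 1, f, hf, hf0 => by
    have htail := summable_fin_prod_of_nonneg (fun i => hf i.succ) (fun i => hf0 i.succ)
    have hprod := (hf 0).mul_of_nonneg htail (hf0 0)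
      (fun x => Finset.prod_nonneg fun i _ => hf0 i.succ (x i))
    refine (hprod.comp_injective (Fin.consEquiv fun _ => β).symm.injective).congr fun x => ?_
    simp [Fin.prod_univ_succ, Fin.consEquiv, Fin.tail]

theorem summable_fintype_prod_of_nonneg {ι β : Type*} [Fintype ι] {f : ι → β → ℝ}
    (hf : ∀ i, Summable (f i)) (hf0 : ∀ i b, 0 ≤ f i b) :
    Summable fun x : ι → β => ∏ i, f i (x i) := by
  let e := Fintype.equivFin ι
  have h := summable_fin_prod_of_nonneg (fun j => hf (e.symm j)) (fun j => hf0 (e.symm j))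
  refine (h.comp_injective (e.arrowCongr (Equiv.refl β)).injective).congr fun x => ?_
  exact e.symm.prod_comp fun i => f i (x i)

noncomputable def riemannThetaTerm {ι : Type*} [Fintype ι] (n : ι → ℤ) (z : ι → ℂ)
    (τ : Matrix ι ι ℂ) : ℂ :=
  cexp ((π : ℂ) * I * (∑ i, ∑ j, (n i : ℂ) * τ i j * (n j : ℂ))
    + 2 * (π : ℂ) * I * ∑ i, (n i : ℂ) * z i)

section

variable {ι : Type*} [Fintype ι]

theorem riemannThetaTerm_diagonal [DecidableEq ι] (n : ι → ℤ) (z d : ι → ℂ) :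
    riemannThetaTerm n z (diagonal d) = ∏ i, jacobiTheta₂_term (n i) (z i) (d i) := by
  simp only [riemannThetaTerm, jacobiTheta₂_term, diagonal_apply, mul_ite, ite_mul, mul_zero,
    zero_mul, Finset.sum_ite_eq, Finset.mem_univ, if_true, ← Complex.exp_sum]
  congr 1
  rw [Finset.mul_sum, Finset.mul_sum, ← Finset.sum_add_distrib]
  exact Finset.sum_congr rfl fun i _ => by ring

theorem norm_riemannThetaTerm (n : ι → ℤ) (z : ι → ℂ) (τ : Matrix ι ι ℂ) :
    ‖riemannThetaTerm n z τ‖ = Real.exp (-π * ((fun i => (n i : ℝ)) ⬝ᵥ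
      τ.map im *ᵥ fun i => (n i : ℝ)) - 2 * π * ∑ i, n i * (z i).im) := by
  rw [riemannThetaTerm, Complex.norm_exp]
  congr 1
  simp [dotProduct, mulVec, Finset.mul_sum, mul_assoc, sub_eq_add_neg]

theorem norm_riemannThetaTerm_le_of_dotProduct_mulVec_le (n : ι → ℤ) (z : ι → ℂ)
    {τ τ' : Matrix ι ι ℂ}
    (h : ((fun i => (n i : ℝ)) ⬝ᵥ τ'.map im *ᵥ fun i => (n i : ℝ)) ≤
      (fun i => (n i : ℝ)) ⬝ᵥ τ.map im *ᵥ fun i => (n i : ℝ)) :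
    ‖riemannThetaTerm n z τ‖ ≤ ‖riemannThetaTerm n z τ'‖ := by
  rw [norm_riemannThetaTerm, norm_riemannThetaTerm, Real.exp_le_exp]
  have := mul_le_mul_of_nonneg_left h pi_pos.le
  linarith

theorem summable_norm_riemannThetaTerm_diagonal [DecidableEq ι] (z : ι → ℂ) {d : ι → ℂ}
    (hd : ∀ i, 0 < (d i).im) : Summable fun n => ‖riemannThetaTerm n z (diagonal d)‖ := by
  simp only [riemannThetaTerm_diagonal, norm_prod]
  exact summable_fintype_prod_of_nonneg (f := fun i k => ‖jacobiTheta₂_term k (z i) (d i)‖)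
    (fun i => ((summable_jacobiTheta₂_term_iff _ _).2 (hd i)).norm) fun _ _ => norm_nonneg _

theorem summable_riemannThetaTerm {τ : Matrix ι ι ℂ} (hτ : (τ.map im).PosDef)
    (z : ι → ℂ) :
    Summable (riemannThetaTerm · z τ) := by
  classical
  obtain ⟨c, hc, hle⟩ := hτ.exists_pos_mul_sum_sq_le
  have hdiag : ∀ x : ι → ℝ,
      x ⬝ᵥ (diagonal fun _ => (c : ℂ) * I).map im *ᵥ x = c * ∑ i, x i ^ 2 := fun x => by
    rw [diagonal_map (by simp)]
    simp only [dotProduct, mulVec_diagonal, mul_im, ofReal_re, ofReal_im,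
      I_re, I_im, mul_zero, mul_one, add_zero, Finset.mul_sum]
    exact Finset.sum_congr rfl fun _ _ => by ring
  refine (summable_norm_riemannThetaTerm_diagonal z (d := fun _ => c * I)
    fun _ => by simpa using hc).of_norm_bounded fun n => ?_
  exact norm_riemannThetaTerm_le_of_dotProduct_mulVec_le n z ((hdiag _).trans_le (hle _))

end

theorem riemann_theta_summable_general (g : ℕ)
    (τ : Matrix (Fin g) (Fin g) ℂ)
    (hpos : (Matrix.of fun i j => (τ i j).im).PosDef)
    (z : Fin g → ℂ) :
    Summable fun n : Fin g → ℤ =>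
      Complex.exp ((Real.pi : ℂ) * Complex.I *
          (∑ i, ∑ j, (n i : ℂ) * τ i j * (n j : ℂ))
        + 2 * (Real.pi : ℂ) * Complex.I * ∑ i, (n i : ℂ) * z i) :=
  summable_riemannThetaTerm hpos z

/-- For `τ` in the Siegel upper half-space (symmetric with positive
definite imaginary part) and any `z ∈ ℂ^g`, the series defining the Riemann theta
function converges absolutely, i.e. the family of its terms is summable. -/
theorem riemann_theta_summable (g : ℕ) (hg : 0 < g)
    (τ : Matrix (Fin g) (Fin g) ℂ) (hsym : τ.IsSymm)
    (hpos : (Matrix.of fun i j => (τ i j).im).PosDef)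
    (z : Fin g → ℂ) :
    Summable fun n : Fin g → ℤ =>
      Complex.exp ((Real.pi : ℂ) * Complex.I *
          (∑ i, ∑ j, (n i : ℂ) * τ i j * (n j : ℂ))
        + 2 * (Real.pi : ℂ) * Complex.I * ∑ i, (n i : ℂ) * z i) :=
  riemann_theta_summable_general g τ hpos z
end

section
/- Let τ : ℝ³ → ℂ (with coordinates (x,y,t)) be a smooth nowhere-vanishing function and let c, d ∈ ℂ. Suppose that τ satisfies the Hirota bilinear equation at every point: (τ_xxxx·τ − 4τ_xxx·τ_x + 3τ_xx²) + 4(τ_x·τ_t − τ·τ_xt) + 6c(τ_xx·τ − τ_x²) + 3(τ·τ_yy − τ_y²) + 8d·τ² = 0. Then the function u := 2(τ·τ_xx − τ_x²)/τ² + c (which equals 2 ∂²/∂x² log τ + c) is a solution of the Kadomtsev–Petviashvili equation ∂/∂x(4u_t − 6u·u_x − u_xxx) = 3u_yy at every point of ℝ³. -/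
/-- Partial derivative with respect to the first variable `x`. -/
noncomputable def px (f : ℝ × ℝ × ℝ → ℂ) (p : ℝ × ℝ × ℝ) : ℂ :=
  fderiv ℝ f p (1, 0, 0)

/-- Partial derivative with respect to the second variable `y`. -/
noncomputable def py (f : ℝ × ℝ × ℝ → ℂ) (p : ℝ × ℝ × ℝ) : ℂ :=
  fderiv ℝ f p (0, 1, 0)

/-- Partial derivative with respect to the third variable `t`. -/
noncomputable def pt (f : ℝ × ℝ × ℝ → ℂ) (p : ℝ × ℝ × ℝ) : ℂ :=
  fderiv ℝ f p (0, 0, 1)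

noncomputable def pd (v : ℝ × ℝ × ℝ) (f : ℝ × ℝ × ℝ → ℂ) (p : ℝ × ℝ × ℝ) : ℂ :=
  fderiv ℝ f p v

namespace KP
variable {f g : ℝ × ℝ × ℝ → ℂ} {v w p : ℝ × ℝ × ℝ} {a : ℂ}

lemma pd_smooth (hf : ContDiff ℝ (⊤ : ℕ∞) f) (v : ℝ × ℝ × ℝ) : ContDiff ℝ (⊤ : ℕ∞) (pd v f) :=
  (ContinuousLinearMap.apply ℝ ℂ v).contDiff.comp (hf.fderiv_right (by simp))

lemma dAt (hf : ContDiff ℝ (⊤ : ℕ∞) f) (p : ℝ × ℝ × ℝ) : DifferentiableAt ℝ f p :=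
  (hf.differentiable (by simp)) p

lemma pd_const (a : ℂ) : pd v (fun _ => a) p = 0 := by
  simp [pd]

lemma pd_add (hf : ContDiff ℝ (⊤ : ℕ∞) f) (hg : ContDiff ℝ (⊤ : ℕ∞) g) :
    pd v (fun q => f q + g q) p = pd v f p + pd v g p := by
  simp [pd, fderiv_fun_add (dAt hf p) (dAt hg p)]

lemma pd_sub (hf : ContDiff ℝ (⊤ : ℕ∞) f) (hg : ContDiff ℝ (⊤ : ℕ∞) g) :
    pd v (fun q => f q - g q) p = pd v f p - pd v g p := by
  simp [pd, fderiv_fun_sub (dAt hf p) (dAt hg p)]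

lemma pd_mul (hf : ContDiff ℝ (⊤ : ℕ∞) f) (hg : ContDiff ℝ (⊤ : ℕ∞) g) :
    pd v (fun q => f q * g q) p = pd v f p * g p + f p * pd v g p := by
  simp only [pd, fderiv_fun_mul (dAt hf p) (dAt hg p), ContinuousLinearMap.add_apply,
    ContinuousLinearMap.smul_apply, smul_eq_mul]
  ring

lemma pd_cmul (a : ℂ) (hf : ContDiff ℝ (⊤ : ℕ∞) f) :
    pd v (fun q => a * f q) p = a * pd v f p := by
  have := pd_mul (f := fun _ => a) (g := f) (v := v) (p := p) contDiff_const hf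
  simpa [pd_const] using this

lemma pd_sq (hf : ContDiff ℝ (⊤ : ℕ∞) f) :
    pd v (fun q => f q ^ 2) p = 2 * f p * pd v f p := by
  have := pd_mul (f := f) (g := f) (v := v) (p := p) hf hf
  have e : (fun q => f q ^ 2) = fun q => f q * f q := by funext q; ring
  rw [e, this]; ring

lemma pd_cube (hf : ContDiff ℝ (⊤ : ℕ∞) f) :
    pd v (fun q => f q ^ 3) p = 3 * f p ^ 2 * pd v f p := by
  have e : (fun q => f q ^ 3) = fun q => f q * f q ^ 2 := by funext q; ring
  rw [e, pd_mul hf (hf.pow 2), pd_sq hf]; ring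

lemma pd_inv (hg : ContDiff ℝ (⊤ : ℕ∞) g) (h0 : ∀ q, g q ≠ 0) :
    pd v (fun q => (g q)⁻¹) p = -(pd v g p) / g p ^ 2 := by
  have h1 : HasFDerivAt (fun x => (g x)⁻¹)
      ((-ContinuousLinearMap.mulLeftRight ℝ ℂ (g p)⁻¹ (g p)⁻¹).comp (fderiv ℝ g p)) p :=
    (hasFDerivAt_inv' (h0 p)).comp p (dAt hg p).hasFDerivAt
  have := h1.fderiv
  simp only [pd, this, ContinuousLinearMap.comp_apply, ContinuousLinearMap.neg_apply,
    ContinuousLinearMap.mulLeftRight_apply]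
  field_simp

lemma pd_div (hf : ContDiff ℝ (⊤ : ℕ∞) f) (hg : ContDiff ℝ (⊤ : ℕ∞) g) (h0 : ∀ q, g q ≠ 0) :
    pd v (fun q => f q / g q) p = (pd v f p * g p - f p * pd v g p) / g p ^ 2 := by
  have e : (fun q => f q / g q) = fun q => f q * (g q)⁻¹ := by
    funext q; rw [div_eq_mul_inv]
  have hg0 := h0 p
  rw [e, pd_mul (g := fun q => (g q)⁻¹) hf (hg.inv h0), pd_inv hg h0]
  field_simp
  ring

lemma pd_comm (hf : ContDiff ℝ (⊤ : ℕ∞) f) (v w p) :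
    pd v (pd w f) p = pd w (pd v f) p := by
  have hdf : DifferentiableAt ℝ (fderiv ℝ f) p :=
    ((hf.fderiv_right (m := (⊤ : ℕ∞)) (by simp)).differentiable (by simp)) p
  have key : ∀ u : ℝ × ℝ × ℝ, fderiv ℝ (fun q => fderiv ℝ f q u) p
      = (fderiv ℝ (fderiv ℝ f) p).flip u := by
    intro u
    have := fderiv_clm_apply (c := fderiv ℝ f) (u := fun _ => u) hdf (differentiableAt_const u)
    simpa using this
  have hsymm : IsSymmSndFDerivAt ℝ f p := hf.contDiffAt.isSymmSndFDerivAt (by rw [minSmoothness_of_isRCLikeNormedField]; exact WithTop.coe_le_coe.mpr le_top)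
  show fderiv ℝ (pd w f) p v = fderiv ℝ (pd v f) p w
  rw [show pd w f = fun q => fderiv ℝ f q w from rfl, key w,
      show pd v f = fun q => fderiv ℝ f q v from rfl, key v]
  simpa using hsymm v w

end KP

open KP

/-- If a smooth nowhere-vanishing function `τ : ℝ³ → ℂ` satisfies the
Hirota bilinear equation everywhere, then `u = 2 ∂²/∂x² log τ + c
= 2(τ·τ_xx − τ_x²)/τ² + c` solves the KP equation `∂/∂x(4u_t − 6u·u_x − u_xxx) = 3u_yy`
at every point of `ℝ³`. -/
theorem hirota_implies_KP (f : ℝ × ℝ × ℝ → ℂ) (hf : ContDiff ℝ (⊤ : ℕ∞) f)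
    (hne : ∀ p, f p ≠ 0) (c d : ℂ)
    (hHirota : ∀ p : ℝ × ℝ × ℝ,
      (px (px (px (px f))) p * f p - 4 * px (px (px f)) p * px f p
          + 3 * (px (px f) p) ^ 2)
        + 4 * (px f p * pt f p - f p * px (pt f) p)
        + 6 * c * (px (px f) p * f p - (px f p) ^ 2)
        + 3 * (f p * py (py f) p - (py f p) ^ 2)
        + 8 * d * (f p) ^ 2 = 0)
    (u : ℝ × ℝ × ℝ → ℂ)
    (hu : u = fun p => 2 * (f p * px (px f) p - (px f p) ^ 2) / (f p) ^ 2 + c) :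
    ∀ p : ℝ × ℝ × ℝ,
      px (fun q => 4 * pt u q - 6 * u q * px u q - px (px (px u)) q) p =
        3 * py (py u) p := by
  have epx : px = pd (1, 0, 0) := rfl
  have epy : py = pd (0, 1, 0) := rfl
  have ept : pt = pd (0, 0, 1) := rfl
  simp only [epx, epy, ept] at hHirota hu ⊢
  set X : ℝ × ℝ × ℝ := (1, 0, 0) with hXdef
  set Y : ℝ × ℝ × ℝ := (0, 1, 0) with hYdef
  set T : ℝ × ℝ × ℝ := (0, 0, 1) with hTdef
  -- smoothness of partials of f
  have hF1 : ContDiff ℝ (⊤ : ℕ∞) (pd X f) := pd_smooth hf X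
  have hF2 : ContDiff ℝ (⊤ : ℕ∞) (pd X (pd X f)) := pd_smooth hF1 X
  have hF3 : ContDiff ℝ (⊤ : ℕ∞) (pd X (pd X (pd X f))) := pd_smooth hF2 X
  have hFY : ContDiff ℝ (⊤ : ℕ∞) (pd Y f) := pd_smooth hf Y
  have hFT : ContDiff ℝ (⊤ : ℕ∞) (pd T f) := pd_smooth hf T
  -- the log-derivative functions
  set g : ℝ × ℝ × ℝ → ℂ := fun q => pd X f q / f q with hgdef
  set h : ℝ × ℝ × ℝ → ℂ := fun q => pd Y f q / f q with hhdef
  have hgs : ContDiff ℝ (⊤ : ℕ∞) g := by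
    rw [hgdef]; simp only [div_eq_mul_inv]; exact hF1.mul (hf.inv hne)
  have hhs : ContDiff ℝ (⊤ : ℕ∞) h := by
    rw [hhdef]; simp only [div_eq_mul_inv]; exact hFY.mul (hf.inv hne)
  have hG1 : ContDiff ℝ (⊤ : ℕ∞) (pd X g) := pd_smooth hgs X
  have hG2 : ContDiff ℝ (⊤ : ℕ∞) (pd X (pd X g)) := pd_smooth hG1 X
  have hG3 : ContDiff ℝ (⊤ : ℕ∞) (pd X (pd X (pd X g))) := pd_smooth hG2 X
  have hGT : ContDiff ℝ (⊤ : ℕ∞) (pd T g) := pd_smooth hgs T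
  have hHY : ContDiff ℝ (⊤ : ℕ∞) (pd Y h) := pd_smooth hhs Y
  -- first x-derivative of g
  have eG1 : ∀ q, pd X g q
      = (pd X (pd X f) q * f q - pd X f q * pd X f q) / f q ^ 2 := by
    intro q
    rw [hgdef, pd_div hF1 hf hne]
  have eG1fun : pd X g = fun q =>
      (pd X (pd X f) q * f q - pd X f q * pd X f q) / f q ^ 2 := funext eG1
  -- second x-derivative of g
  have eG2 : ∀ q, pd X (pd X g) q
      = (pd X (pd X (pd X f)) q * f q ^ 2
          - 3 * (pd X f q * pd X (pd X f) q * f q) + 2 * pd X f q ^ 3) / f q ^ 3 := by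
    intro q
    rw [eG1fun, pd_div (ContDiff.sub (hF2.mul hf) (hF1.mul hF1)) (hf.pow 2)
        (fun q => pow_ne_zero 2 (hne q)),
      pd_sub (hF2.mul hf) (hF1.mul hF1), pd_mul hF2 hf, pd_mul hF1 hF1, pd_sq hf]
    have := hne q
    field_simp
    ring
  have eG2fun : pd X (pd X g) = fun q =>
      (pd X (pd X (pd X f)) q * f q ^ 2
        - 3 * (pd X f q * pd X (pd X f) q * f q) + 2 * pd X f q ^ 3) / f q ^ 3 := funext eG2
  have hF4 : ContDiff ℝ (⊤ : ℕ∞) (pd X (pd X (pd X (pd X f)))) := pd_smooth hF3 X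
  have hnum2 : ContDiff ℝ (⊤ : ℕ∞) (fun q => pd X (pd X (pd X f)) q * f q ^ 2
      - 3 * (pd X f q * pd X (pd X f) q * f q) + 2 * pd X f q ^ 3) :=
    ((hF3.mul (hf.pow 2)).sub (contDiff_const.mul ((hF1.mul hF2).mul hf))).add
      (contDiff_const.mul (hF1.pow 3))
  have eG3 : ∀ q, pd X (pd X (pd X g)) q
      = (pd X (pd X (pd X (pd X f))) q * f q ^ 3
          - 4 * (pd X f q * pd X (pd X (pd X f)) q * f q ^ 2)
          - 3 * (pd X (pd X f) q ^ 2 * f q ^ 2)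
          + 12 * (pd X f q ^ 2 * pd X (pd X f) q * f q)
          - 6 * pd X f q ^ 4) / f q ^ 4 := by
    intro q
    rw [eG2fun, pd_div hnum2 (hf.pow 3) (fun q => pow_ne_zero 3 (hne q)),
      pd_add ((hF3.mul (hf.pow 2)).sub (contDiff_const.mul ((hF1.mul hF2).mul hf)))
        (contDiff_const.mul (hF1.pow 3)),
      pd_sub (hF3.mul (hf.pow 2)) (contDiff_const.mul ((hF1.mul hF2).mul hf)),
      pd_mul hF3 (hf.pow 2), pd_sq hf,
      pd_cmul 3 ((hF1.mul hF2).mul hf), pd_mul (hF1.mul hF2) hf, pd_mul hF1 hF2,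
      pd_cmul 2 (hF1.pow 3), pd_cube hF1, pd_cube hf]
    have := hne q
    field_simp
    ring
  have eGT : ∀ q, pd T g q
      = (pd X (pd T f) q * f q - pd X f q * pd T f q) / f q ^ 2 := by
    intro q
    rw [hgdef, pd_div hF1 hf hne, pd_comm hf T X q]
  have eHY : ∀ q, pd Y h q
      = (pd Y (pd Y f) q * f q - pd Y f q * pd Y f q) / f q ^ 2 := by
    intro q
    rw [hhdef, pd_div hFY hf hne]
  have eG1m : ∀ q, pd X g q * f q ^ 2
      = pd X (pd X f) q * f q - pd X f q * pd X f q := fun q => by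
    rw [eG1]; exact div_mul_cancel₀ _ (pow_ne_zero 2 (hne q))
  have eG3m : ∀ q, pd X (pd X (pd X g)) q * f q ^ 4
      = pd X (pd X (pd X (pd X f))) q * f q ^ 3
          - 4 * (pd X f q * pd X (pd X (pd X f)) q * f q ^ 2)
          - 3 * (pd X (pd X f) q ^ 2 * f q ^ 2)
          + 12 * (pd X f q ^ 2 * pd X (pd X f) q * f q)
          - 6 * pd X f q ^ 4 := fun q => by
    rw [eG3]; exact div_mul_cancel₀ _ (pow_ne_zero 4 (hne q))
  have eGTm : ∀ q, pd T g q * f q ^ 2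
      = pd X (pd T f) q * f q - pd X f q * pd T f q := fun q => by
    rw [eGT]; exact div_mul_cancel₀ _ (pow_ne_zero 2 (hne q))
  have eHYm : ∀ q, pd Y h q * f q ^ 2
      = pd Y (pd Y f) q * f q - pd Y f q * pd Y f q := fun q => by
    rw [eHY]; exact div_mul_cancel₀ _ (pow_ne_zero 2 (hne q))
  have hR0 : ∀ q, pd X (pd X (pd X g)) q + 6 * pd X g q ^ 2 - 4 * pd T g q
      + 6 * c * pd X g q + 3 * pd Y h q + 8 * d = 0 := by
    intro q
    have hq := hne q
    have h4 : f q ^ 4 ≠ 0 := pow_ne_zero _ hq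
    have key : (pd X (pd X (pd X g)) q + 6 * pd X g q ^ 2 - 4 * pd T g q
        + 6 * c * pd X g q + 3 * pd Y h q + 8 * d) * f q ^ 4
        = (pd X (pd X (pd X (pd X f))) q * f q - 4 * pd X (pd X (pd X f)) q * pd X f q
            + 3 * pd X (pd X f) q ^ 2
            + 4 * (pd X f q * pd T f q - f q * pd X (pd T f) q)
            + 6 * c * (pd X (pd X f) q * f q - pd X f q ^ 2)
            + 3 * (f q * pd Y (pd Y f) q - pd Y f q ^ 2)
            + 8 * d * f q ^ 2) * f q ^ 2 := by
      linear_combination eG3m q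
        + (6 * (pd X g q * f q ^ 2)
            + 6 * (pd X (pd X f) q * f q - pd X f q * pd X f q) + 6 * c * f q ^ 2) * eG1m q
        - 4 * f q ^ 2 * eGTm q + 3 * f q ^ 2 * eHYm q
    rw [hHirota q, zero_mul] at key
    exact (mul_eq_zero.mp key).resolve_right h4
  intro p
  -- u in terms of g
  have euf : u = fun q => 2 * pd X g q + c := by
    funext q
    simp only [hu]
    rw [eG1 q]
    ring
  -- derivatives of u
  have hcu : ContDiff ℝ (⊤ : ℕ∞) (fun r => 2 * pd X g r) := contDiff_const.mul hG1
  have uT : pd T u = fun q => 2 * pd T (pd X g) q := by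
    funext q
    rw [euf, pd_add hcu contDiff_const, pd_cmul 2 hG1, pd_const]
    ring
  have uX : pd X u = fun q => 2 * pd X (pd X g) q := by
    funext q
    rw [euf, pd_add hcu contDiff_const, pd_cmul 2 hG1, pd_const]
    ring
  have uXXX : pd X (pd X (pd X u)) = fun q => 2 * pd X (pd X (pd X (pd X g))) q := by
    rw [uX]
    have l2 : pd X (fun q => 2 * pd X (pd X g) q) = fun q => 2 * pd X (pd X (pd X g)) q :=
      funext fun q => pd_cmul 2 hG2
    rw [l2]
    exact funext fun q => pd_cmul 2 hG3
  have uYY : pd Y (pd Y u) = fun q => 2 * pd Y (pd Y (pd X g)) q := by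
    have l1 : pd Y u = fun q => 2 * pd Y (pd X g) q := by
      funext q
      rw [euf, pd_add hcu contDiff_const, pd_cmul 2 hG1, pd_const]
      ring
    rw [l1]
    exact funext fun q => pd_cmul 2 (pd_smooth hG1 Y)
  -- the function R is identically zero
  have hRfun : (fun q => pd X (pd X (pd X g)) q + 6 * pd X g q ^ 2 - 4 * pd T g q
      + 6 * c * pd X g q + 3 * pd Y h q + 8 * d) = fun _ => (0 : ℂ) := funext hR0
  -- first x-derivative of R
  have hT2f : ContDiff ℝ (⊤ : ℕ∞) (fun r => 6 * pd X g r ^ 2) := contDiff_const.mul (hG1.pow 2)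
  have hT3f : ContDiff ℝ (⊤ : ℕ∞) (fun r => 4 * pd T g r) := contDiff_const.mul hGT
  have hT4f : ContDiff ℝ (⊤ : ℕ∞) (fun r => 6 * c * pd X g r) := contDiff_const.mul hG1
  have hT5f : ContDiff ℝ (⊤ : ℕ∞) (fun r => 3 * pd Y h r) := contDiff_const.mul hHY
  have hS1 : ContDiff ℝ (⊤ : ℕ∞) (fun r => pd X (pd X (pd X g)) r + 6 * pd X g r ^ 2) := hG3.add hT2f
  have hS2 : ContDiff ℝ (⊤ : ℕ∞) (fun r => pd X (pd X (pd X g)) r + 6 * pd X g r ^ 2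
      - 4 * pd T g r) := hS1.sub hT3f
  have hS3 : ContDiff ℝ (⊤ : ℕ∞) (fun r => pd X (pd X (pd X g)) r + 6 * pd X g r ^ 2
      - 4 * pd T g r + 6 * c * pd X g r) := hS2.add hT4f
  have hS4 : ContDiff ℝ (⊤ : ℕ∞) (fun r => pd X (pd X (pd X g)) r + 6 * pd X g r ^ 2
      - 4 * pd T g r + 6 * c * pd X g r + 3 * pd Y h r) := hS3.add hT5f
  have E1 : ∀ q, pd X (fun r => pd X (pd X (pd X g)) r + 6 * pd X g r ^ 2 - 4 * pd T g r
      + 6 * c * pd X g r + 3 * pd Y h r + 8 * d) q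
      = pd X (pd X (pd X (pd X g))) q + 12 * (pd X g q * pd X (pd X g) q)
        - 4 * pd X (pd T g) q + 6 * c * pd X (pd X g) q + 3 * pd X (pd Y h) q := by
    intro q
    rw [pd_add hS4 contDiff_const, pd_const, pd_add hS3 hT5f, pd_cmul 3 hHY,
      pd_add hS2 hT4f, pd_cmul (6 * c) hG1, pd_sub hS1 hT3f, pd_cmul 4 hGT,
      pd_add hG3 hT2f, pd_cmul 6 (hG1.pow 2), pd_sq hG1]
    ring
  have E1fun := funext E1
  -- second x-derivative of R
  have hG4 : ContDiff ℝ (⊤ : ℕ∞) (pd X (pd X (pd X (pd X g)))) := pd_smooth hG3 X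
  have hA2 : ContDiff ℝ (⊤ : ℕ∞) (pd X (pd T g)) := pd_smooth hGT X
  have hA3 : ContDiff ℝ (⊤ : ℕ∞) (pd X (pd Y h)) := pd_smooth hHY X
  have hU2 : ContDiff ℝ (⊤ : ℕ∞) (fun r => 12 * (pd X g r * pd X (pd X g) r)) :=
    contDiff_const.mul (hG1.mul hG2)
  have hU3 : ContDiff ℝ (⊤ : ℕ∞) (fun r => 4 * pd X (pd T g) r) := contDiff_const.mul hA2
  have hU4 : ContDiff ℝ (⊤ : ℕ∞) (fun r => 6 * c * pd X (pd X g) r) := contDiff_const.mul hG2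
  have hU5 : ContDiff ℝ (⊤ : ℕ∞) (fun r => 3 * pd X (pd Y h) r) := contDiff_const.mul hA3
  have hV1 : ContDiff ℝ (⊤ : ℕ∞) (fun r => pd X (pd X (pd X (pd X g))) r
      + 12 * (pd X g r * pd X (pd X g) r)) := hG4.add hU2
  have hV2 : ContDiff ℝ (⊤ : ℕ∞) (fun r => pd X (pd X (pd X (pd X g))) r
      + 12 * (pd X g r * pd X (pd X g) r) - 4 * pd X (pd T g) r) := hV1.sub hU3
  have hV3 : ContDiff ℝ (⊤ : ℕ∞) (fun r => pd X (pd X (pd X (pd X g))) r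
      + 12 * (pd X g r * pd X (pd X g) r) - 4 * pd X (pd T g) r
      + 6 * c * pd X (pd X g) r) := hV2.add hU4
  have E2 : pd X (pd X (fun r => pd X (pd X (pd X g)) r + 6 * pd X g r ^ 2 - 4 * pd T g r
      + 6 * c * pd X g r + 3 * pd Y h r + 8 * d)) p
      = pd X (pd X (pd X (pd X (pd X g)))) p
        + 12 * (pd X (pd X g) p * pd X (pd X g) p + pd X g p * pd X (pd X (pd X g)) p)
        - 4 * pd X (pd X (pd T g)) p + 6 * c * pd X (pd X (pd X g)) p
        + 3 * pd X (pd X (pd Y h)) p := by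
    rw [E1fun, pd_add hV3 hU5, pd_cmul 3 hA3, pd_add hV2 hU4, pd_cmul (6 * c) hG2,
      pd_sub hV1 hU3, pd_cmul 4 hA2, pd_add hG4 hU2, pd_cmul 12 (hG1.mul hG2),
      pd_mul hG1 hG2]
  have h00 : pd X (pd X (fun r => pd X (pd X (pd X g)) r + 6 * pd X g r ^ 2 - 4 * pd T g r
      + 6 * c * pd X g r + 3 * pd Y h r + 8 * d)) p = 0 := by
    have z1 : pd X (fun _ : ℝ × ℝ × ℝ => (0 : ℂ)) = fun _ => (0 : ℂ) :=
      funext fun q => pd_const 0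
    rw [hRfun, z1]
    exact pd_const 0
  have hcomb := E2.symm.trans h00
  -- commutation of derivatives
  have cT : pd X (pd X (pd T g)) p = pd X (pd T (pd X g)) p := by
    have e : pd X (pd T g) = pd T (pd X g) := funext fun q => pd_comm hgs X T q
    rw [e]
  have cY : pd X (pd X (pd Y h)) p = pd Y (pd Y (pd X g)) p := by
    have e1 : pd Y g = pd X h := by
      funext q
      rw [hgdef, hhdef, pd_div hF1 hf hne, pd_div hFY hf hne, pd_comm hf Y X q]
      ring
    have e2 : pd X (pd Y h) = pd Y (pd Y g) := by
      have e2' : pd X (pd Y h) = pd Y (pd X h) := funext fun q => pd_comm hhs X Y q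
      rw [e2', ← e1]
    rw [e2]
    rw [show pd X (pd Y (pd Y g)) p = pd Y (pd X (pd Y g)) p from
      pd_comm (pd_smooth hgs Y) X Y p]
    have e3 : pd X (pd Y g) = pd Y (pd X g) := funext fun q => pd_comm hgs X Y q
    rw [e3]
  rw [cT, cY] at hcomb
  -- rewrite the goal
  have inner_eq : (fun q => 4 * pd T u q - 6 * u q * pd X u q - pd X (pd X (pd X u)) q)
      = fun q => 8 * pd T (pd X g) q - 24 * (pd X g q * pd X (pd X g) q)
          - 12 * c * pd X (pd X g) q - 2 * pd X (pd X (pd X (pd X g))) q := by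
    funext q
    simp only [uXXX]
    simp only [uT]
    simp only [uX]
    simp only [euf]
    ring
  rw [inner_eq]
  simp only [uYY]
  have hW1 : ContDiff ℝ (⊤ : ℕ∞) (fun r => 8 * pd T (pd X g) r) :=
    contDiff_const.mul (pd_smooth hG1 T)
  have hW2 : ContDiff ℝ (⊤ : ℕ∞) (fun r => 24 * (pd X g r * pd X (pd X g) r)) :=
    contDiff_const.mul (hG1.mul hG2)
  have hW3 : ContDiff ℝ (⊤ : ℕ∞) (fun r => 12 * c * pd X (pd X g) r) := contDiff_const.mul hG2
  rw [pd_sub ((hW1.sub hW2).sub hW3) (contDiff_const.mul hG4),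
    pd_sub (hW1.sub hW2) hW3, pd_sub hW1 hW2, pd_cmul 8 (pd_smooth hG1 T),
    pd_cmul 24 (hG1.mul hG2), pd_mul hG1 hG2, pd_cmul (12 * c) hG2, pd_cmul 2 hG4]
  linear_combination (-2 : ℂ) * hcomb
end

section
/- Let g be a positive integer, let θ : ℂ^g → ℂ be an entire (analytic) function, and let z₀ ∈ ℂ^g be a point with θ(z₀) = 0 and ∂θ/∂z_j(z₀) = 0 for all j = 1,…,g. Fix U, V, W ∈ ℂ^g and c, d ∈ ℂ. Then the directional derivative in the direction U of the function z ↦ H_z(U,V,W,c,d), evaluated at z = z₀, equals 2·(∂_U²θ(z₀))·(∂_U³θ(z₀)). -/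
open Complex

/-- The directional derivative operator `∂_U = u₁ ∂/∂z₁ + ⋯ + u_g ∂/∂z_g`. -/
noncomputable def dd {g : ℕ} (U : Fin g → ℂ) (f : (Fin g → ℂ) → ℂ)
    (z : Fin g → ℂ) : ℂ :=
  fderiv ℂ f z U

/-- The Hirota quartic `H_z(U,V,W,c,d)` associated to a function `θ : ℂ^g → ℂ`. -/
noncomputable def hirotaQuartic {g : ℕ} (θ : (Fin g → ℂ) → ℂ)
    (z U V W : Fin g → ℂ) (c d : ℂ) : ℂ :=
  ((dd U)^[4] θ z * θ z - 4 * (dd U)^[3] θ z * dd U θ z + 3 * ((dd U)^[2] θ z) ^ 2)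
    + 4 * (dd U θ z * dd W θ z - θ z * dd U (dd W θ) z)
    + 6 * c * ((dd U)^[2] θ z * θ z - (dd U θ z) ^ 2)
    + 3 * (θ z * (dd V)^[2] θ z - (dd V θ z) ^ 2)
    + 8 * d * (θ z) ^ 2

/-! Every term of the Hirota quartic is a product of two factors, and at `z₀` the factors `θ`
and `∂θ` vanish. By the product rule the only surviving contributions to `∂_U H` come from
`-4 ∂_U³θ ∂_Uθ` and `3 (∂_U²θ)²`, which give `-4 ∂_U³θ ∂_U²θ + 6 ∂_U²θ ∂_U³θ`. -/

theorem ContinuousLinearMap.eq_zero_of_apply_single_one {𝕜 F ι : Type*} [NontriviallyNormedField 𝕜]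
    [NormedAddCommGroup F] [NormedSpace 𝕜 F] [Finite ι] [DecidableEq ι]
    (L : (ι → 𝕜) →L[𝕜] F) (hL : ∀ j, L (Pi.single j 1) = 0) : L = 0 :=
  coe_injective <| (Pi.basisFun 𝕜 ι).ext fun j => by simpa using hL j

section DirectionalDerivative

variable {g : ℕ} {U : Fin g → ℂ} {f h : (Fin g → ℂ) → ℂ} {z : Fin g → ℂ}

theorem dd_fun_add (hf : DifferentiableAt ℂ f z) (hh : DifferentiableAt ℂ h z) :
    dd U (fun w => f w + h w) z = dd U f z + dd U h z := by
  simp [dd, fderiv_fun_add hf hh]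

theorem dd_fun_sub (hf : DifferentiableAt ℂ f z) (hh : DifferentiableAt ℂ h z) :
    dd U (fun w => f w - h w) z = dd U f z - dd U h z := by
  simp [dd, fderiv_fun_sub hf hh]

theorem dd_fun_mul (hf : DifferentiableAt ℂ f z) (hh : DifferentiableAt ℂ h z) :
    dd U (fun w => f w * h w) z = dd U f z * h z + f z * dd U h z := by
  simp [dd, fderiv_fun_mul hf hh, add_comm, mul_comm]

theorem dd_const (a : ℂ) : dd U (fun _ => a) z = 0 := by
  simp [dd]

theorem analyticAt_dd (hf : ∀ z, AnalyticAt ℂ f z) (z : Fin g → ℂ) : AnalyticAt ℂ (dd U f) z :=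
  ((ContinuousLinearMap.apply ℂ ℂ U).analyticAt _).comp (hf z).fderiv

theorem analyticAt_iterate_dd (hf : ∀ z, AnalyticAt ℂ f z) (n : ℕ) (z : Fin g → ℂ) :
    AnalyticAt ℂ ((dd U)^[n] f) z := by
  induction n generalizing z with
  | zero => exact hf z
  | succ n ih => rw [Function.iterate_succ_apply']; exact analyticAt_dd ih z

end DirectionalDerivative

theorem dirDeriv_hirota_quartic_at_singular_point_general (g : ℕ)
    (θ : (Fin g → ℂ) → ℂ) (hθ : ∀ z, AnalyticAt ℂ θ z)
    (z₀ : Fin g → ℂ) (h0 : θ z₀ = 0)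
    (h1 : ∀ j : Fin g, fderiv ℂ θ z₀ (Pi.single j 1) = 0)
    (U V W : Fin g → ℂ) (c d : ℂ) :
    dd U (fun z => hirotaQuartic θ z U V W c d) z₀ =
      2 * (dd U)^[2] θ z₀ * (dd U)^[3] θ z₀ := by
  have hdiff : ∀ X n, Differentiable ℂ ((dd X)^[n] θ) := fun X n z =>
    (analyticAt_iterate_dd hθ n z).differentiableAt
  have hdiff₁ : ∀ X, Differentiable ℂ (dd X θ) := fun X => hdiff X 1
  have hdiffUW : Differentiable ℂ (dd U (dd W θ)) := fun z =>
    (analyticAt_dd (analyticAt_dd hθ) z).differentiableAt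
  have hcrit : ∀ X, dd X θ z₀ = 0 := by
    simp [dd, ContinuousLinearMap.eq_zero_of_apply_single_one _ h1]
  simp (disch := fun_prop) only [hirotaQuartic, pow_two, dd_fun_add, dd_fun_sub, dd_fun_mul,
    dd_const]
  simp only [Function.iterate_succ_apply', Function.iterate_zero_apply, h0, hcrit]
  ring

/-- If `θ` is entire and `z₀` is a point where `θ` and all its first
partial derivatives vanish, then for fixed `U, V, W, c, d` the directional derivative
in direction `U` of `z ↦ H_z(U,V,W,c,d)` at `z₀` equals `2·∂_U²θ(z₀)·∂_U³θ(z₀)`. -/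
theorem dirDeriv_hirota_quartic_at_singular_point (g : ℕ) (hg : 0 < g)
    (θ : (Fin g → ℂ) → ℂ) (hθ : ∀ z, AnalyticAt ℂ θ z)
    (z₀ : Fin g → ℂ) (h0 : θ z₀ = 0)
    (h1 : ∀ j : Fin g, fderiv ℂ θ z₀ (Pi.single j 1) = 0)
    (U V W : Fin g → ℂ) (c d : ℂ) :
    dd U (fun z => hirotaQuartic θ z U V W c d) z₀ =
      2 * (dd U)^[2] θ z₀ * (dd U)^[3] θ z₀ :=
  dirDeriv_hirota_quartic_at_singular_point_general g θ hθ z₀ h0 h1 U V W c d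
end
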